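/- Identification region of the average treatment effect with outcomes in [0,1]: let ℓ0 be a probability measure on ℝ × Bool whose first coordinate lies in [0,1] ℓ0-almost surely; set γ = ℓ0({(y, z) : z = true}) and a = ∫ (if z then y else −y) dℓ0(y, z). Then the set { ∫ (y1 − y0) dμ : μ a probability measure on Bool × ℝ × ℝ with (y1, y0) ∈ [0,1] × [0,1] μ-almost surely whose pushforward under s ↦ (if z then y1 else y0, z) equals ℓ0 } equals the closed interval [a − γ, a + (1 − γ)]. -/

import Mathlib

/-!
Split `Y(1) - Y(0)` into an observed part (`Y*` on treated units, `-Y*` on control units), whose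
mean `a` is determined by `ℓ₀`, and an unobserved part (`-Y(0)` on treated units, `Y(1)` on control
units). With outcomes in `[0,1]` the unobserved part lies in `[-1, 0]` on the treated and in
`[0, 1]` on the controls, so its mean lies in `[-γ, 1 - γ]`. Conversely, imputing `1 - t` for every
missing `Y(0)` and `t` for every missing `Y(1)` gives unobserved mean `t - γ`, for any `t ∈ [0,1]`.
-/

open MeasureTheory

def observe (s : Bool × ℝ × ℝ) : ℝ × Bool := (if s.1 then s.2.1 else s.2.2, s.1)

def observedEffect (p : ℝ × Bool) : ℝ := if p.2 then p.1 else -p.1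

def unobservedEffect (s : Bool × ℝ × ℝ) : ℝ := if s.1 then -s.2.2 else s.2.1

def treated : Set (ℝ × Bool) := {p | p.2 = true}

def impute (t : ℝ) (p : ℝ × Bool) : Bool × ℝ × ℝ :=
  (p.2, if p.2 then p.1 else t, if p.2 then 1 - t else p.1)

lemma measurableSet_treated : MeasurableSet treated :=
  measurable_snd (measurableSet_singleton true)

@[fun_prop]
lemma measurable_observe : Measurable observe :=
  measurable_from_prod_countable_right fun z => by
    cases z <;> simp only [observe, Bool.false_eq_true, ↓reduceIte] <;> fun_prop

@[fun_prop]
lemma measurable_observedEffect : Measurable observedEffect :=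
  measurable_from_prod_countable_left fun z => by
    cases z <;> simp only [observedEffect, Bool.false_eq_true, ↓reduceIte] <;> fun_prop

@[fun_prop]
lemma measurable_unobservedEffect : Measurable unobservedEffect :=
  measurable_from_prod_countable_right fun z => by
    cases z <;> simp only [unobservedEffect, Bool.false_eq_true, ↓reduceIte] <;> fun_prop

@[fun_prop]
lemma measurable_impute (t : ℝ) : Measurable (impute t) :=
  measurable_from_prod_countable_left fun z => by
    cases z <;> simp only [impute, Bool.false_eq_true, ↓reduceIte] <;> fun_prop

lemma sub_eq_observedEffect_observe_add (s : Bool × ℝ × ℝ) :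
    s.2.1 - s.2.2 = observedEffect (observe s) + unobservedEffect s := by
  rcases s with ⟨_ | _, y₁, y₀⟩ <;> simp [observedEffect, observe, unobservedEffect] <;> ring

lemma observe_comp_impute (t : ℝ) : observe ∘ impute t = id := by
  funext ⟨y, z⟩; cases z <;> rfl

lemma unobservedEffect_impute (t : ℝ) (p : ℝ × Bool) :
    unobservedEffect (impute t p) = t - treated.indicator 1 p := by
  rcases p with ⟨y, _ | _⟩ <;> simp [unobservedEffect, impute, treated]

lemma unobservedEffect_mem_Icc {s : Bool × ℝ × ℝ} (h₁ : s.2.1 ∈ Set.Icc (0 : ℝ) 1)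
    (h₀ : s.2.2 ∈ Set.Icc (0 : ℝ) 1) :
    unobservedEffect s ∈
      Set.Icc (-(observe ⁻¹' treated).indicator 1 s) ((observe ⁻¹' treated)ᶜ.indicator 1 s) := by
  rcases s with ⟨_ | _, y₁, y₀⟩ <;>
    simp_all [unobservedEffect, observe, treated, Set.indicator]

section

variable {μ : Measure (Bool × ℝ × ℝ)}

lemma integrable_unobservedEffect (h₁ : Integrable (fun s => s.2.1) μ)
    (h₀ : Integrable (fun s => s.2.2) μ) : Integrable unobservedEffect μ := by
  refine (h₁.norm.add h₀.norm).mono' (by fun_prop) (ae_of_all _ fun s => ?_)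
  rcases s with ⟨_ | _, y₁, y₀⟩ <;> simp [unobservedEffect]

lemma integral_sub_eq_integral_map_observe_add (h₁ : Integrable (fun s => s.2.1) μ)
    (h₀ : Integrable (fun s => s.2.2) μ) :
    ∫ s, (s.2.1 - s.2.2) ∂μ =
      ∫ p, observedEffect p ∂μ.map observe + ∫ s, unobservedEffect s ∂μ := by
  have hF : Integrable (fun s => observedEffect (observe s)) μ := by
    refine (h₁.norm.add h₀.norm).mono'
      (measurable_observedEffect.comp measurable_observe).aestronglyMeasurable
      (ae_of_all _ fun s => ?_)
    rcases s with ⟨_ | _, y₁, y₀⟩ <;> simp [observedEffect, observe]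
  rw [integral_map (by fun_prop) (by fun_prop),
    ← integral_add hF (integrable_unobservedEffect h₁ h₀)]
  simp only [sub_eq_observedEffect_observe_add]

variable (hμ : ∀ᵐ s ∂μ, s.2.1 ∈ Set.Icc (0 : ℝ) 1 ∧ s.2.2 ∈ Set.Icc (0 : ℝ) 1)
include hμ

lemma integrable_outcomes_of_ae_mem_Icc [IsFiniteMeasure μ] :
    Integrable (fun s => s.2.1) μ ∧ Integrable (fun s => s.2.2) μ :=
  ⟨.of_mem_Icc 0 1 (by fun_prop) (hμ.mono fun _ => And.left),
    .of_mem_Icc 0 1 (by fun_prop) (hμ.mono fun _ => And.right)⟩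

lemma integral_sub_eq_integral_map_observe_add_of_ae_mem_Icc [IsFiniteMeasure μ] :
    ∫ s, (s.2.1 - s.2.2) ∂μ =
      ∫ p, observedEffect p ∂μ.map observe + ∫ s, unobservedEffect s ∂μ :=
  integral_sub_eq_integral_map_observe_add (integrable_outcomes_of_ae_mem_Icc hμ).1
    (integrable_outcomes_of_ae_mem_Icc hμ).2

lemma integral_unobservedEffect_mem_Icc [IsProbabilityMeasure μ] :
    ∫ s, unobservedEffect s ∂μ ∈
      Set.Icc (-(μ.map observe).real treated) (1 - (μ.map observe).real treated) := by
  obtain ⟨h₁, h₀⟩ := integrable_outcomes_of_ae_mem_Icc hμ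
  have hT : MeasurableSet (observe ⁻¹' treated) := measurable_observe measurableSet_treated
  have hbounds := hμ.mono fun s hs => unobservedEffect_mem_Icc hs.1 hs.2
  rw [map_measureReal_apply measurable_observe measurableSet_treated,
    ← probReal_compl_eq_one_sub hT, ← integral_indicator_one hT,
    ← integral_indicator_one hT.compl, ← integral_neg]
  exact ⟨integral_mono_ae ((integrable_const 1).indicator hT).neg
      (integrable_unobservedEffect h₁ h₀) (hbounds.mono fun _ => And.left),
    integral_mono_ae (integrable_unobservedEffect h₁ h₀)
      ((integrable_const 1).indicator hT.compl) (hbounds.mono fun _ => And.right)⟩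

end

lemma map_observe_map_impute (ℓ : Measure (ℝ × Bool)) (t : ℝ) :
    (ℓ.map (impute t)).map observe = ℓ := by
  rw [Measure.map_map measurable_observe (measurable_impute t), observe_comp_impute,
    Measure.map_id]

section

variable {ℓ : Measure (ℝ × Bool)} {t : ℝ} (hℓ : ∀ᵐ p ∂ℓ, p.1 ∈ Set.Icc (0 : ℝ) 1)
    (ht : t ∈ Set.Icc (0 : ℝ) 1)
include hℓ ht

lemma ae_map_impute_mem_Icc :
    ∀ᵐ s ∂ℓ.map (impute t), s.2.1 ∈ Set.Icc (0 : ℝ) 1 ∧ s.2.2 ∈ Set.Icc (0 : ℝ) 1 := by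
  rw [ae_map_iff (measurable_impute t).aemeasurable (by measurability)]
  filter_upwards [hℓ] with ⟨y, z⟩ hy
  cases z <;> simp_all [impute]

lemma integral_sub_map_impute [IsProbabilityMeasure ℓ] :
    ∫ s, (s.2.1 - s.2.2) ∂ℓ.map (impute t) =
      ∫ p, observedEffect p ∂ℓ + (t - ℓ.real treated) := by
  have := Measure.isProbabilityMeasure_map (μ := ℓ) (measurable_impute t).aemeasurable
  rw [integral_sub_eq_integral_map_observe_add_of_ae_mem_Icc (ae_map_impute_mem_Icc hℓ ht),
    map_observe_map_impute, integral_map (measurable_impute t).aemeasurable (by fun_prop)]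
  have hT : Integrable (treated.indicator (1 : ℝ × Bool → ℝ)) ℓ :=
    (integrable_const 1).indicator measurableSet_treated
  simp only [unobservedEffect_impute]
  rw [integral_sub (integrable_const t) hT,
    integral_indicator_one measurableSet_treated, integral_const, probReal_univ, one_smul]

end

/-- identification region of the ATE with outcomes in `[0,1]`: for a
probability measure `ℓ₀` on `ℝ × Bool` whose first coordinate is a.s. in `[0,1]`, with
`γ = ℓ₀({z = true})` and `a = ∫ (if z then y else −y) dℓ₀`, the set of average treatment
effects `∫ (y1 − y0) dμ` over all probability measures `μ` on `Bool × ℝ × ℝ` with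
potential outcomes a.s. in `[0,1] × [0,1]` and with law of `(Y*, Z)` equal to `ℓ₀`
is the closed interval `[a − γ, a + (1 − γ)]`. -/
theorem ate_identification_region_bounded_outcomes
    (ℓ₀ : Measure (ℝ × Bool)) [IsProbabilityMeasure ℓ₀]
    (hsupp : ∀ᵐ p ∂ℓ₀, p.1 ∈ Set.Icc (0:ℝ) 1)
    (γ a : ℝ)
    (hγ : γ = (ℓ₀ {p : ℝ × Bool | p.2 = true}).toReal)
    (ha : a = ∫ p : ℝ × Bool, (if p.2 then p.1 else -p.1) ∂ℓ₀) :
    {x : ℝ | ∃ μ : Measure (Bool × ℝ × ℝ), IsProbabilityMeasure μ ∧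
        (∀ᵐ s ∂μ, s.2.1 ∈ Set.Icc (0:ℝ) 1 ∧ s.2.2 ∈ Set.Icc (0:ℝ) 1) ∧
        Measure.map (fun s : Bool × ℝ × ℝ => ((if s.1 then s.2.1 else s.2.2), s.1)) μ = ℓ₀ ∧
        x = ∫ s : Bool × ℝ × ℝ, (s.2.1 - s.2.2) ∂μ} =
      Set.Icc (a - γ) (a + (1 - γ)) := by
  change γ = ℓ₀.real treated at hγ
  change a = ∫ p, observedEffect p ∂ℓ₀ at ha
  ext x
  constructor
  · rintro ⟨μ, hμ, hbdd, hobs, rfl⟩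
    change μ.map observe = ℓ₀ at hobs
    have hG := integral_unobservedEffect_mem_Icc hbdd
    rw [hobs, ← hγ] at hG
    rw [integral_sub_eq_integral_map_observe_add_of_ae_mem_Icc hbdd, hobs, ← ha]
    exact ⟨by linarith [hG.1], by linarith [hG.2]⟩
  · rintro ⟨hlo, hhi⟩
    have ht : x - a + γ ∈ Set.Icc (0 : ℝ) 1 := ⟨by linarith, by linarith⟩
    refine ⟨ℓ₀.map (impute (x - a + γ)), Measure.isProbabilityMeasure_map (by fun_prop),
      ae_map_impute_mem_Icc hsupp ht, map_observe_map_impute ℓ₀ _, ?_⟩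
    rw [integral_sub_map_impute hsupp ht, ← ha, ← hγ]
    ring
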